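/- arXiv:2401.09375 — 2 statements merged into one kernel-verified Lean document; each statement's English description precedes it below -/
import Mathlib

section
/- If σ: [0,∞) → ℝ satisfies the differential equation σ' = -K·|σ|^{1/2}·sgn(σ) with K > 0 and initial condition σ(0) = σ₀, then σ reaches zero in finite time; specifically σ(t) = 0 for all t ≥ 2|σ₀|^{1/2}/K. -/
/-!
Along a solution, `σ²` has derivative `-2K|σ|^{3/2} ≤ 0`, so `|σ|` is non-increasing and a
solution that vanishes once stays at zero. Away from zero, `√|σ|` has constant derivative
`-K/2`; hence if `σ` did not vanish on `[0, T]`, `T = 2√|σ₀|/K`, then `√|σ T| ≤ √|σ₀| - K T/2 = 0`,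
which is absurd.
-/

open Set

lemma Real.sign_mul_self_eq_abs (x : ℝ) : Real.sign x * x = |x| := by
  rcases lt_trichotomy x 0 with h | rfl | h
  · rw [Real.sign_of_neg h, abs_of_neg h]; ring
  · simp
  · rw [Real.sign_of_pos h, abs_of_pos h, one_mul]

lemma antitoneOn_sqrt_add_mul_of_hasDerivAt {K : ℝ} {f : ℝ → ℝ} {D : Set ℝ} (hD : Convex ℝ D)
    (hpos : ∀ x ∈ D, 0 < f x) (hf : ∀ x ∈ D, HasDerivAt f (-K * √(f x)) x) :
    AntitoneOn (fun x => √(f x) + K / 2 * x) D := by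
  have hderiv : ∀ x ∈ D, HasDerivAt (fun x => √(f x) + K / 2 * x) 0 x := by
    intro x hx
    have hsqrt : √(f x) ≠ 0 := (Real.sqrt_pos.mpr (hpos x hx)).ne'
    refine (((hf x hx).sqrt (hpos x hx).ne').add
      ((hasDerivAt_id x).const_mul (K / 2))).congr_deriv ?_
    field_simp
    ring
  exact antitoneOn_of_hasDerivWithinAt_nonpos hD
    (fun x hx => (hderiv x hx).continuousAt.continuousWithinAt)
    (fun x hx => (hderiv x (interior_subset hx)).hasDerivWithinAt) (fun _ _ => le_rfl)

section SignedSqrtFlow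

variable {K : ℝ} {σ : ℝ → ℝ}
  (hderiv : ∀ t ≥ (0:ℝ), HasDerivAt σ (-K * |σ t| ^ ((1:ℝ)/2) * Real.sign (σ t)) t)
include hderiv

lemma antitoneOn_abs_of_signed_sqrt_flow (hK : 0 ≤ K) : AntitoneOn (fun t => |σ t|) (Ici 0) := by
  have hsq : ∀ t ∈ Ici (0:ℝ),
      HasDerivAt (fun s => σ s ^ 2) (-(2 * K * |σ t| ^ ((1:ℝ)/2) * |σ t|)) t := by
    intro t ht
    refine ((hderiv t ht).pow 2).congr_deriv ?_
    rw [← Real.sign_mul_self_eq_abs]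
    push_cast
    ring
  have hanti : AntitoneOn (fun t => σ t ^ 2) (Ici 0) :=
    antitoneOn_of_hasDerivWithinAt_nonpos (convex_Ici 0)
      (fun t ht => (hsq t ht).continuousAt.continuousWithinAt)
      (fun t ht => (hsq t (interior_subset ht)).hasDerivWithinAt)
      (fun t _ => neg_nonpos.mpr (by positivity))
  exact fun s hs t ht hst => sq_le_sq.mp (hanti hs ht hst)

lemma hasDerivAt_abs_of_signed_sqrt_flow {t : ℝ} (ht : 0 ≤ t) (hσ : σ t ≠ 0) :
    HasDerivAt (fun s => |σ s|) (-K * √|σ t|) t := by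
  rw [Real.sqrt_eq_rpow]
  rcases hσ.lt_or_gt with hneg | hpos
  · refine ((hasDerivAt_abs_neg hneg).comp t (hderiv t ht)).congr_deriv ?_
    rw [Real.sign_of_neg hneg]
    ring
  · refine ((hasDerivAt_abs_pos hpos).comp t (hderiv t ht)).congr_deriv ?_
    rw [Real.sign_of_pos hpos]
    ring

end SignedSqrtFlow

theorem finite_time_convergence_sigma
    (K σ₀ : ℝ) (hK : 0 < K) (σ : ℝ → ℝ)
    (hderiv : ∀ t ≥ (0:ℝ), HasDerivAt σ (-K * |σ t| ^ ((1:ℝ)/2) * Real.sign (σ t)) t)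
    (hinit : σ 0 = σ₀) :
    ∀ t : ℝ, t ≥ 2 * |σ₀| ^ ((1:ℝ)/2) / K → σ t = 0 := by
  rw [← Real.sqrt_eq_rpow]
  set T := 2 * √|σ₀| / K with hT
  have hT0 : 0 ≤ T := by positivity
  have hKT : K / 2 * T = √|σ₀| := by rw [hT]; field_simp
  have habs := antitoneOn_abs_of_signed_sqrt_flow hderiv hK.le
  have hσT : σ T = 0 := by
    by_contra hne
    have hpos : ∀ s ∈ Icc 0 T, 0 < |σ s| := fun s hs =>
      (abs_pos.mpr hne).trans_le (habs hs.1 hT0 hs.2)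
    have hdecay := antitoneOn_sqrt_add_mul_of_hasDerivAt (convex_Icc 0 T) hpos
      (fun s hs => hasDerivAt_abs_of_signed_sqrt_flow hderiv hs.1 (abs_pos.mp (hpos s hs)))
      (left_mem_Icc.mpr hT0) (right_mem_Icc.mpr hT0) hT0
    have hsqrt : 0 < √|σ T| := Real.sqrt_pos.mpr (hpos T (right_mem_Icc.mpr hT0))
    simp only [hinit, mul_zero, add_zero, hKT] at hdecay
    linarith
  intro t ht
  simpa [hσT] using habs hT0 (hT0.trans ht) ht
end

section
/- Let V(t) ≥ 0 be a differentiable function satisfying V'(t) = -K·(2V(t))^{3/4} with K > 0. Then V(t) = 0 for all t ≥ 2·(2V(0))^{1/4}/K, i.e., V converges to zero in finite time. -/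
theorem finite_time_convergence_V
    (K : ℝ) (hK : 0 < K) (V : ℝ → ℝ)
    (hV : Differentiable ℝ V)
    (hnonneg : ∀ t ≥ (0:ℝ), 0 ≤ V t)
    (hderiv : ∀ t ≥ (0:ℝ), deriv V t = -K * (2 * V t) ^ ((3:ℝ)/4)) :
    ∀ t : ℝ, t ≥ 2 * (2 * V 0) ^ ((1:ℝ)/4) / K → V t = 0 := by
  set T := 2 * (2 * V 0) ^ ((1:ℝ)/4) / K with hTdef
  have hV0 : 0 ≤ V 0 := hnonneg 0 le_rfl
  have hT0 : 0 ≤ T := by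
    have : (0:ℝ) ≤ (2 * V 0) ^ ((1:ℝ)/4) := Real.rpow_nonneg (by linarith) _
    positivity
  have hanti : AntitoneOn V (Set.Ici 0) := by
    apply antitoneOn_of_deriv_nonpos (convex_Ici 0) hV.continuous.continuousOn
      (fun x _ => (hV x).differentiableWithinAt)
    intro x hx
    rw [interior_Ici] at hx
    rw [hderiv x hx.le]
    have h1 : (0:ℝ) ≤ (2 * V x) ^ ((3:ℝ)/4) :=
      Real.rpow_nonneg (by linarith [hnonneg x hx.le]) _
    nlinarith
  have key : V T = 0 := by
    by_contra hne
    have hVT : 0 < V T := lt_of_le_of_ne (hnonneg T hT0) (Ne.symm hne)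
    have hpos : ∀ x ∈ Set.Icc (0:ℝ) T, 0 < V x := fun x hx =>
      lt_of_lt_of_le hVT (hanti (Set.mem_Ici.2 hx.1) (Set.mem_Ici.2 hT0) hx.2)
    set g : ℝ → ℝ := fun t => (2 * V t) ^ ((1:ℝ)/4) + K/2 * t with hg
    have hgcont : ContinuousOn g (Set.Icc 0 T) := by
      apply ContinuousOn.add
      · exact ((continuous_const.mul hV.continuous).rpow_const
          (fun x => Or.inr (by norm_num))).continuousOn
      · exact (continuous_const.mul continuous_id).continuousOn
    have hgderiv : ∀ x ∈ Set.Ico (0:ℝ) T, HasDerivWithinAt g 0 (Set.Ici x) x := by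
      intro x hx
      have hVx : 0 < V x := hpos x ⟨hx.1, hx.2.le⟩
      have h2V : (0:ℝ) < 2 * V x := by linarith
      have hd : HasDerivAt (fun t => 2 * V t) (2 * deriv V x) x :=
        (hV x).hasDerivAt.const_mul 2
      have hr : HasDerivAt (fun t => (2 * V t) ^ ((1:ℝ)/4))
          (2 * deriv V x * ((1:ℝ)/4) * (2 * V x) ^ ((1:ℝ)/4 - 1)) x :=
        hd.rpow_const (Or.inl (ne_of_gt h2V))
      have hlin : HasDerivAt (fun t : ℝ => K/2 * t) (K/2 * 1) x :=
        (hasDerivAt_id x).const_mul (K/2)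
      have hG : HasDerivAt g
          (2 * deriv V x * ((1:ℝ)/4) * (2 * V x) ^ ((1:ℝ)/4 - 1) + K/2 * 1) x :=
        hr.add hlin
      have hmul : (2 * V x) ^ ((1:ℝ)/4 - 1) * (2 * V x) ^ ((3:ℝ)/4) = 1 := by
        rw [← Real.rpow_add h2V]
        norm_num
      have hval : 2 * deriv V x * ((1:ℝ)/4) * (2 * V x) ^ ((1:ℝ)/4 - 1) + K/2 * 1 = 0 := by
        rw [hderiv x hx.1]
        linear_combination (-(K/2)) * hmul
      rw [hval] at hG
      exact hG.hasDerivWithinAt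
    have hconst := constant_of_has_deriv_right_zero hgcont hgderiv T (Set.right_mem_Icc.2 hT0)
    have hKT : K / 2 * T = (2 * V 0) ^ ((1:ℝ)/4) := by
      rw [hTdef]; field_simp
    have hgT : (2 * V T) ^ ((1:ℝ)/4) = 0 := by
      have : (2 * V T) ^ ((1:ℝ)/4) + K/2 * T = (2 * V 0) ^ ((1:ℝ)/4) + K/2 * 0 := hconst
      rw [hKT] at this; linarith
    have : (0:ℝ) < (2 * V T) ^ ((1:ℝ)/4) := Real.rpow_pos_of_pos (by linarith) _
    linarith
  intro t ht
  have htT : T ≤ t := ht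
  have ht0 : 0 ≤ t := le_trans hT0 htT
  have h1 : V t ≤ V T := hanti (Set.mem_Ici.2 hT0) (Set.mem_Ici.2 ht0) htT
  have h2 : 0 ≤ V t := hnonneg t ht0
  linarith [key]
end
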